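/- arXiv:1110.2710 — 3 statements merged into one kernel-verified Lean document; each statement's English description precedes it below -/
import Mathlib

section
/- Let F : ℝ² → ℝ² be conjugate by a linear invertible map L (with first row (a,b)) to a triangular map G(u,v) = K(u,v)ᵀ + (0, u·q(u))ᵀ with K diagonal and q a real polynomial, and suppose F(0)=0. Then there exist a real 2×2 matrix B, reals α, β, and a real polynomial p such that F(x,y) = B(x,y)ᵀ + u²p(u)·(α,β)ᵀ where u = ax+by. -/
open Matrix

theorem stmt4 (K L : Matrix (Fin 2) (Fin 2) ℝ) (q : Polynomial ℝ) (a b c d : ℝ)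
    (hK : K 0 1 = 0 ∧ K 1 0 = 0)
    (hL : L = !![a, b; c, d]) (hdet : L.det ≠ 0)
    (G : (Fin 2 → ℝ) → (Fin 2 → ℝ))
    (hG : ∀ w : Fin 2 → ℝ, G w = K *ᵥ w + ![0, w 0 * q.eval (w 0)])
    (F : (Fin 2 → ℝ) → (Fin 2 → ℝ))
    (hF : ∀ v : Fin 2 → ℝ, F v = L⁻¹ *ᵥ G (L *ᵥ v))
    (hF0 : F 0 = 0) :
    ∃ (B : Matrix (Fin 2) (Fin 2) ℝ) (α β : ℝ) (p : Polynomial ℝ),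
      ∀ x y : ℝ, F ![x, y] =
        B *ᵥ ![x, y]
          + ((a * x + b * y) ^ 2 * p.eval (a * x + b * y)) • ![α, β] := by
  -- split q(u) = q(0) + u * p(u)
  obtain ⟨p, hp⟩ : Polynomial.X ∣ (q - Polynomial.C (q.eval 0)) := by
    rw [Polynomial.X_dvd_iff]
    simp [Polynomial.eval_zero, Polynomial.coeff_zero_eq_eval_zero]
  have hq : ∀ u : ℝ, q.eval u = q.eval 0 + u * p.eval u := by
    intro u
    have := congrArg (Polynomial.eval u) hp
    simp at this
    linarith
  set w : Fin 2 → ℝ := L⁻¹ *ᵥ ![0, 1] with hw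
  refine ⟨L⁻¹ * K * L + q.eval 0 • vecMulVec w ![a, b], w 0, w 1, p, ?_⟩
  intro x y
  have hwe : ![w 0, w 1] = w := by
    funext i; fin_cases i <;> rfl
  have hu : (L *ᵥ ![x, y]) 0 = a * x + b * y := by
    subst hL; simp [Matrix.mulVec, dotProduct, Fin.sum_univ_two]
  set u := a * x + b * y with hudef
  have hvec : (![0, (L *ᵥ ![x, y]) 0 * q.eval ((L *ᵥ ![x, y]) 0)] : Fin 2 → ℝ)
      = (u * q.eval u) • ![0, 1] := by
    rw [hu]; funext i; fin_cases i <;> simp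
  rw [hF, hG, hvec, Matrix.mulVec_add, Matrix.mulVec_smul, Matrix.add_mulVec,
    ← hw, Matrix.mulVec_mulVec, Matrix.mulVec_mulVec, hwe]
  have hvmv : (q.eval 0 • vecMulVec w ![a, b]) *ᵥ ![x, y] = (q.eval 0 * u) • w := by
    funext i
    simp [vecMulVec, Matrix.mulVec, dotProduct, Fin.sum_univ_two, hudef]
    ring
  rw [hvmv, hq u]
  rw [add_assoc]
  congr 1
  rw [← add_smul]
  congr 1
  ring
end

section
/- Let n ≥ 3 and let ζ be the rotation of ℝ² by angle 2π/n. Let N : ℝ² → ℝ² be given by N(x,y) = r(ax+by)·(α,β)ᵀ with r a real polynomial function and (α,β) ≠ (0,0). If N is equivariant under ζ (i.e., N(ζ·v) = ζ·N(v) for all v ∈ ℝ²) and a,b are not both zero, then r is identically zero. -/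
open Matrix Real

theorem stmt7 (n : ℕ) (hn : 3 ≤ n) (r : Polynomial ℝ) (a b α β : ℝ)
    (hαβ : (α, β) ≠ (0, 0)) (hab : (a, b) ≠ (0, 0))
    (N : (Fin 2 → ℝ) → (Fin 2 → ℝ))
    (hN : ∀ v : Fin 2 → ℝ, N v = r.eval (a * v 0 + b * v 1) • ![α, β])
    (ζ : Matrix (Fin 2) (Fin 2) ℝ)
    (hζ : ζ = !![Real.cos (2 * π / n), -Real.sin (2 * π / n);
                 Real.sin (2 * π / n), Real.cos (2 * π / n)])
    (hequiv : ∀ v : Fin 2 → ℝ, N (ζ *ᵥ v) = ζ *ᵥ N v) :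
    ∀ u : ℝ, r.eval u = 0 := by
  intro u
  have hn3 : (3:ℝ) ≤ (n:ℝ) := by exact_mod_cast hn
  have hnpos : (0:ℝ) < (n:ℝ) := by linarith
  have hs : 0 < Real.sin (2 * π / n) := by
    apply Real.sin_pos_of_pos_of_lt_pi
    · positivity
    · have h1 : 2 * π / n ≤ 2 * π / 3 := by
        apply div_le_div_of_nonneg_left (by positivity) (by norm_num) hn3
      nlinarith [pi_pos]
  have hαβ' : α ≠ 0 ∨ β ≠ 0 := by
    by_contra h
    push_neg at h
    exact hαβ (by simp [h.1, h.2])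
  have hpos : 0 < α ^ 2 + β ^ 2 := by
    rcases hαβ' with h | h <;> positivity
  have hv : ∃ v : Fin 2 → ℝ, a * v 0 + b * v 1 = u := by
    rcases eq_or_ne a 0 with ha | ha
    · have hb : b ≠ 0 := by
        intro hb0
        exact hab (by simp [ha, hb0])
      exact ⟨![0, u / b], by simp [ha, mul_div_cancel₀ _ hb]⟩
    · exact ⟨![u / a, 0], by simp [mul_div_cancel₀ _ ha]⟩
  obtain ⟨v, hv⟩ := hv
  have h := hequiv v
  rw [hN, hN, hv] at h
  have h0 := congrFun h 0
  have h1 := congrFun h 1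
  simp [hζ, Matrix.mulVec, dotProduct, Fin.sum_univ_two] at h0 h1
  have key : r.eval u * (Real.sin (2 * π / n) * (α ^ 2 + β ^ 2)) = 0 := by
    linear_combination β * h0 - α * h1
  have := mul_eq_zero.mp key
  rcases this with h | h
  · exact h
  · exfalso
    nlinarith
end

section
/- Let d₁, d₂ ∈ ℝ with |d₁| < 1, |d₂| < 1, and p a real polynomial. Define F(x,y) = (d₁x + y²p(y²), d₂y). Then for every (x₀,y₀) ∈ ℝ², the sequence of iterates Fⁿ(x₀,y₀) converges to the origin as n → ∞. -/
open Filter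

theorem stmt17 (d₁ d₂ : ℝ) (hd₁ : |d₁| < 1) (hd₂ : |d₂| < 1) (p : Polynomial ℝ)
    (F : ℝ × ℝ → ℝ × ℝ)
    (hF : ∀ x y : ℝ, F (x, y) = (d₁ * x + y ^ 2 * p.eval (y ^ 2), d₂ * y)) :
    ∀ x₀ y₀ : ℝ, Tendsto (fun n : ℕ => F^[n] (x₀, y₀)) atTop (nhds (0, 0)) := by
  intro x₀ y₀
  obtain ⟨M₀, hM₀⟩ := (isCompact_Icc (a := (0:ℝ)) (b := y₀ ^ 2)).exists_bound_of_continuousOn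
    (p.continuous).continuousOn
  have habs1 : (0:ℝ) ≤ |d₁| := abs_nonneg _
  have hd₂2 : d₂ ^ 2 < 1 := by nlinarith [abs_nonneg d₂, sq_abs d₂]
  have hd₂2' : (0:ℝ) ≤ d₂ ^ 2 := sq_nonneg _
  set ρ : ℝ := (max |d₁| (d₂ ^ 2) + 1) / 2 with hρdef
  have hmax : max |d₁| (d₂ ^ 2) < 1 := max_lt hd₁ hd₂2
  have hρ1 : ρ < 1 := by rw [hρdef]; linarith
  have hρd1 : |d₁| < ρ := by
    have := le_max_left |d₁| (d₂ ^ 2); rw [hρdef]; linarith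
  have hρd2 : d₂ ^ 2 ≤ ρ := by
    have := le_max_right |d₁| (d₂ ^ 2); rw [hρdef]; linarith
  have hρ0 : 0 ≤ ρ := le_trans habs1 hρd1.le
  set M : ℝ := y₀ ^ 2 * M₀ with hMdef
  have hM0' : 0 ≤ M₀ := le_trans (norm_nonneg _) (hM₀ 0 ⟨le_refl _, sq_nonneg _⟩)
  have hM : 0 ≤ M := mul_nonneg (sq_nonneg _) hM0'
  set A : ℝ := max |x₀| (M / (ρ - |d₁|)) with hAdef
  have hA0 : 0 ≤ A := le_trans (abs_nonneg _) (le_max_left _ _)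
  have hsub : 0 < ρ - |d₁| := by linarith
  have hAM : M ≤ A * (ρ - |d₁|) := by
    have h1 : M / (ρ - |d₁|) ≤ A := le_max_right _ _
    calc M = (M / (ρ - |d₁|)) * (ρ - |d₁|) := by field_simp
    _ ≤ A * (ρ - |d₁|) := by nlinarith
  set y : ℕ → ℝ := fun n => d₂ ^ n * y₀ with hydef
  set x : ℕ → ℝ := fun n =>
    Nat.rec x₀ (fun n xn => d₁ * xn + (y n) ^ 2 * p.eval ((y n) ^ 2)) n with hxdef
  have hxsucc : ∀ n, x (n + 1) = d₁ * x n + (y n) ^ 2 * p.eval ((y n) ^ 2) := fun n => rfl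
  have hiter : ∀ n, F^[n] (x₀, y₀) = (x n, y n) := by
    intro n
    induction n with
    | zero => simp [hxdef, hydef]
    | succ n ih =>
      rw [Function.iterate_succ_apply', ih, hF, hxsucc]
      have : y (n + 1) = d₂ * y n := by rw [hydef]; ring
      rw [this]
  have hysq : ∀ n, (y n) ^ 2 = (d₂ ^ 2) ^ n * y₀ ^ 2 := by
    intro n; rw [hydef]; ring
  have hcb : ∀ n, |(y n) ^ 2 * p.eval ((y n) ^ 2)| ≤ (d₂ ^ 2) ^ n * M := by
    intro n
    have hpow1 : (d₂ ^ 2) ^ n ≤ 1 := pow_le_one₀ hd₂2' hd₂2.le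
    have hpow0 : 0 ≤ (d₂ ^ 2) ^ n := pow_nonneg hd₂2' n
    have hmem : (y n) ^ 2 ∈ Set.Icc (0:ℝ) (y₀ ^ 2) := by
      constructor
      · exact sq_nonneg _
      · rw [hysq n]; nlinarith [sq_nonneg y₀]
    have hb := hM₀ _ hmem
    rw [Real.norm_eq_abs] at hb
    rw [abs_mul, abs_of_nonneg (sq_nonneg (y n))]
    have h2 : 0 ≤ (d₂ ^ 2) ^ n * y₀ ^ 2 := mul_nonneg hpow0 (sq_nonneg _)
    calc (y n) ^ 2 * |p.eval ((y n) ^ 2)|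
        ≤ (y n) ^ 2 * M₀ := by nlinarith [sq_nonneg (y n), abs_nonneg (p.eval ((y n) ^ 2))]
    _ = (d₂ ^ 2) ^ n * (y₀ ^ 2 * M₀) := by rw [hysq n]; ring
    _ = (d₂ ^ 2) ^ n * M := by rw [hMdef]
  have hxb : ∀ n, |x n| ≤ A * ρ ^ n := by
    intro n
    induction n with
    | zero =>
      have h0 : |x 0| = |x₀| := rfl
      rw [h0, pow_zero, mul_one]
      exact le_max_left _ _
    | succ n ih =>
      have hpowρ : 0 ≤ ρ ^ n := pow_nonneg hρ0 n
      have hpowle : (d₂ ^ 2) ^ n ≤ ρ ^ n := pow_le_pow_left₀ hd₂2' hρd2 n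
      calc |x (n + 1)| = |d₁ * x n + (y n) ^ 2 * p.eval ((y n) ^ 2)| := by rw [hxsucc]
      _ ≤ |d₁ * x n| + |(y n) ^ 2 * p.eval ((y n) ^ 2)| := abs_add_le _ _
      _ = |d₁| * |x n| + |(y n) ^ 2 * p.eval ((y n) ^ 2)| := by rw [abs_mul]
      _ ≤ |d₁| * (A * ρ ^ n) + (d₂ ^ 2) ^ n * M := by
          have := hcb n
          nlinarith [abs_nonneg (x n)]
      _ ≤ |d₁| * (A * ρ ^ n) + ρ ^ n * M := by nlinarith
      _ ≤ A * ρ ^ (n + 1) := by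
          have : (|d₁| * A + M) * ρ ^ n ≤ (A * ρ) * ρ ^ n := by nlinarith
          calc |d₁| * (A * ρ ^ n) + ρ ^ n * M = (|d₁| * A + M) * ρ ^ n := by ring
          _ ≤ (A * ρ) * ρ ^ n := this
          _ = A * ρ ^ (n + 1) := by ring
  have hρtend : Tendsto (fun n : ℕ => ρ ^ n) atTop (nhds 0) :=
    tendsto_pow_atTop_nhds_zero_of_lt_one hρ0 hρ1
  have hxt : Tendsto x atTop (nhds 0) := by
    have hg : Tendsto (fun n : ℕ => A * ρ ^ n) atTop (nhds 0) := by
      simpa using hρtend.const_mul A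
    exact squeeze_zero_norm (fun n => by rw [Real.norm_eq_abs]; exact hxb n) hg
  have hyt : Tendsto y atTop (nhds 0) := by
    have := (tendsto_pow_atTop_nhds_zero_of_lt_one (abs_nonneg d₂) hd₂)
    have h2 : Tendsto (fun n : ℕ => d₂ ^ n) atTop (nhds 0) := by
      exact squeeze_zero_norm (fun n => le_of_eq (by rw [Real.norm_eq_abs, abs_pow])) this
    simpa using h2.mul_const y₀
  have := hxt.prodMk_nhds hyt
  exact this.congr fun n => (hiter n).symm
end
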